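/- Let 1 ≤ d < n be integers, let P ∈ ℝ^{d×n} have invertible leading d×d block P_I, set Q := P_I^{-1} P_II, and let α ≥ β > (n−d)/2 satisfy d/(2α) + (n−d)/(2β) < 1 and α > d/2, and let μ ∈ [0,α], ν ∈ [0,β]. Then there exists a constant C > 0, independent of K, L and of the coefficient family, such that for all positive integers K, L and every family c : ℤ^n → ℂ with M := Σ_{k∈ℤ^n} (‖k_I + Q k_II‖^{2α} + ‖k_II‖^{2β})|c_k|² < ∞, the interpolation error coefficients e_k, defined by e_k = − Σ_{m ∈ ℤ^n ∖ {0}} c_{(k_I + 2K m_I, k_II + 2L m_II)} for k ∈ 𝒦_{K,L} and e_k = c_k for k ∉ 𝒦_{K,L}, satisfy ( Σ_{k∈ℤ^n} (‖k_I + Q k_II‖^{2μ} + ‖k_II‖^{2ν}) |e_k|² )^{1/2} ≤ C (K^{−α} + L^{−β})(K^{μ} + L^{ν}) M^{1/2}. -/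

import Mathlib

open scoped ENNReal

/-- Euclidean norm of a vector in `ℝ^m`. -/
noncomputable def euclNorm {m : ℕ} (x : Fin m → ℝ) : ℝ :=
  ‖(EuclideanSpace.equiv (Fin m) ℝ).symm x‖

/-- Mixed weight `‖k_I + Q k_II‖^(2α) + ‖k_II‖^(2β)` (real powers, `0⁰ = 1`). -/
noncomputable def wMix (d m : ℕ) (Q : Matrix (Fin d) (Fin m) ℝ) (α β : ℝ)
    (k : Fin (d + m) → ℤ) : ℝ :=
  euclNorm ((fun i => (k (Fin.castAdd m i) : ℝ)) +
      Q.mulVec fun j => (k (Fin.natAdd d j) : ℝ)) ^ (2 * α) +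
    euclNorm (fun j => (k (Fin.natAdd d j) : ℝ)) ^ (2 * β)

/-- Membership in the parallelogram index set `𝒦_{K,L}`:
each component of `k_I + Q k_II` lies in `[-K, K)` and each component of `k_II` in `[-L, L)`. -/
def memK (d m : ℕ) (Q : Matrix (Fin d) (Fin m) ℝ) (K L : ℕ) (k : Fin (d + m) → ℤ) : Prop :=
  (∀ i : Fin d,
      -(K : ℝ) ≤ (k (Fin.castAdd m i) : ℝ) + Q.mulVec (fun j => (k (Fin.natAdd d j) : ℝ)) i ∧
      (k (Fin.castAdd m i) : ℝ) + Q.mulVec (fun j => (k (Fin.natAdd d j) : ℝ)) i < (K : ℝ)) ∧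
  (∀ j : Fin m, -(L : ℤ) ≤ k (Fin.natAdd d j) ∧ k (Fin.natAdd d j) < (L : ℤ))

/-- The shifted index `(k_I + 2K v_I, k_II + 2L v_II)`. -/
def shiftIdx (d m K L : ℕ) (k v : Fin (d + m) → ℤ) : Fin (d + m) → ℤ :=
  Fin.append (fun i => k (Fin.castAdd m i) + 2 * (K : ℤ) * v (Fin.castAdd m i))
    fun j => k (Fin.natAdd d j) + 2 * (L : ℤ) * v (Fin.natAdd d j)


/-!
For `k ∈ 𝒦_{K,L}`, Cauchy–Schwarz gives `|e_k|² ≤ (Σ_{v≠0} w(k+v)⁻¹) (Σ_{v≠0} w(k+v) |c_{k+v}|²)`,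
where `k+v = (k_I + 2K v_I, k_II + 2L v_II)` and `w` is the `(α, β)`-weight. As `k_I + Q k_II` and
`k_II` lie in boxes of half-widths `K` and `L`, recentring `v_I` by a rounding that depends only on
`v_II` gives `w(k+v) ≥ (K‖u‖)^{2α} + (L‖v_II‖)^{2β}` with `(u, v_II) ↦ v` injective. Weighted AM-GM
splits the inverse into `(K‖u‖)^{-2αθ} (L‖v_II‖)^{-2β(1-θ)}`, and `d/2α + m/2β < 1` allows
`d < 2αθ`, `m < 2β(1-θ)`, so the first factor is `(K^{-α} + L^{-β})²` times a convergent lattice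
sum. Distinct pairs `(k, v)` alias to distinct indices, so summing over `k ∈ 𝒦` costs at most `M`,
and on `𝒦` the `(μ, ν)`-weight is `O((K^μ + L^ν)²)`. Outside `𝒦` either `‖k_I + Q k_II‖ ≥ K` or
`‖k_II‖ ≥ L`, and trading the exponents `μ ≤ α`, `ν ≤ β` gives the same factor directly.
-/

lemma inv_add_le_rpow_neg_mul_rpow_neg {A B θ : ℝ} (hA : 0 < A) (hB : 0 < B) (hθ0 : 0 ≤ θ)
    (hθ1 : θ ≤ 1) : (A + B)⁻¹ ≤ A ^ (-θ) * B ^ (-(1 - θ)) := by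
  have hAM : A ^ θ * B ^ (1 - θ) ≤ A + B := by
    have := Real.geom_mean_le_arith_mean2_weighted hθ0 (sub_nonneg.mpr hθ1) hA.le hB.le
      (add_sub_cancel θ 1)
    nlinarith
  rw [Real.rpow_neg hA.le, Real.rpow_neg hB.le, ← mul_inv]
  exact inv_anti₀ (by positivity) hAM

lemma mul_rpow_rpow_neg {K a : ℝ} (hK : 0 ≤ K) (ha : 0 ≤ a) (α t : ℝ) :
    ((K * a) ^ (2 * α)) ^ (-t) = (K ^ (-α)) ^ (2 * t) * a ^ (-(2 * α * t)) := by
  rw [← Real.rpow_mul (mul_nonneg hK ha), Real.mul_rpow hK ha, ← Real.rpow_mul hK]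
  ring_nf

lemma inv_mul_rpow {K a : ℝ} (hK : 0 ≤ K) (ha : 0 ≤ a) (α : ℝ) :
    ((K * a) ^ (2 * α))⁻¹ = (K ^ (-α)) ^ 2 * a ^ (-(2 * α)) := by
  rw [← Real.rpow_neg_one, mul_rpow_rpow_neg hK ha, mul_one, mul_one, Real.rpow_two]

lemma rpow_mul_rpow_one_sub_le_sq {x y R θ : ℝ} (hx : 0 ≤ x) (hy : 0 ≤ y) (hxR : x ≤ R)
    (hyR : y ≤ R) (hθ0 : 0 ≤ θ) (hθ1 : θ ≤ 1) : x ^ (2 * θ) * y ^ (2 * (1 - θ)) ≤ R ^ 2 := by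
  have hR : 0 ≤ R := hx.trans hxR
  calc x ^ (2 * θ) * y ^ (2 * (1 - θ)) ≤ R ^ (2 * θ) * R ^ (2 * (1 - θ)) := by
        gcongr
    _ = R ^ 2 := by
        rw [← Real.rpow_add' hR (by ring_nf; norm_num),
          show 2 * θ + 2 * (1 - θ) = ((2 : ℕ) : ℝ) by push_cast; ring, Real.rpow_natCast]

lemma rpow_two_mul {x : ℝ} (hx : 0 ≤ x) (y : ℝ) : x ^ (2 * y) = (x ^ y) ^ 2 := by
  rw [mul_comm, Real.rpow_mul hx, Real.rpow_two]

lemma rpow_le_sq_mul_add_of_le_or_le {a b K L α β μ ν : ℝ} (ha : 0 ≤ a) (hb : 0 ≤ b)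
    (hK : 0 < K) (hL : 0 < L) (hμ0 : 0 ≤ μ) (hμ : μ ≤ α) (hβ : 0 ≤ β) (h : K ≤ a ∨ L ≤ b) :
    a ^ (2 * μ) ≤
      ((K ^ (-α) + L ^ (-β)) * (K ^ μ + L ^ ν)) ^ 2 * (a ^ (2 * α) + b ^ (2 * β)) := by
  have hR1 : K ^ (-α) ≤ K ^ (-α) + L ^ (-β) := le_add_of_nonneg_right (by positivity)
  have hR2 : L ^ (-β) ≤ K ^ (-α) + L ^ (-β) := le_add_of_nonneg_left (by positivity)
  have hS : K ^ μ ≤ K ^ μ + L ^ ν := le_add_of_nonneg_right (by positivity)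
  have ha' := Real.rpow_nonneg ha (2 * α)
  have hb' := Real.rpow_nonneg hb (2 * β)
  by_cases hKa : K ≤ a
  · calc a ^ (2 * μ) = a ^ (2 * (μ - α)) * a ^ (2 * α) := by
          rw [← Real.rpow_add (hK.trans_le hKa)]; ring_nf
      _ ≤ K ^ (2 * (μ - α)) * a ^ (2 * α) :=
          mul_le_mul_of_nonneg_right (Real.rpow_le_rpow_of_nonpos hK hKa (by linarith)) ha'
      _ = (K ^ (-α) * K ^ μ) ^ 2 * a ^ (2 * α) := by
          rw [rpow_two_mul hK.le, ← Real.rpow_add hK, neg_add_eq_sub]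
      _ ≤ _ := by gcongr; exact le_add_of_nonneg_right hb'
  · have hLb := h.resolve_left hKa
    calc a ^ (2 * μ) ≤ K ^ (2 * μ) := Real.rpow_le_rpow ha (le_of_not_ge hKa) (by linarith)
      _ = (K ^ μ) ^ 2 * ((L ^ (-β)) ^ 2 * L ^ (2 * β)) := by
          rw [rpow_two_mul hK.le, ← rpow_two_mul hL.le, ← Real.rpow_add hL]
          simp
      _ = (L ^ (-β) * K ^ μ) ^ 2 * L ^ (2 * β) := by ring
      _ ≤ (L ^ (-β) * K ^ μ) ^ 2 * b ^ (2 * β) := by gcongr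
      _ ≤ ((K ^ (-α) + L ^ (-β)) * (K ^ μ + L ^ ν)) ^ 2 * b ^ (2 * β) := by gcongr
      _ ≤ _ := by gcongr; exact le_add_of_nonneg_left ha'

lemma exists_exponent_split {a b α β : ℝ} (ha : 0 ≤ a) (hb : 0 ≤ b) (hα : 0 < α) (hβ : 0 < β)
    (h : a / (2 * α) + b / (2 * β) < 1) :
    ∃ θ, 0 < θ ∧ θ < 1 ∧ a < 2 * α * θ ∧ b < 2 * β * (1 - θ) := by
  have ha' : 0 ≤ a / (2 * α) := by positivity
  have hb' : 0 ≤ b / (2 * β) := by positivity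
  refine ⟨(a / (2 * α) + (1 - b / (2 * β))) / 2, by linarith, by linarith, ?_, ?_⟩
  · rw [← div_lt_iff₀' (by positivity)]; linarith
  · rw [← div_lt_iff₀' (by positivity)]; linarith

lemma mul_abs_le_abs_add_two_mul {K x : ℝ} (hx : |x| ≤ K) (n : ℤ) :
    K * |(n : ℝ)| ≤ |x + 2 * K * n| := by
  rcases eq_or_ne n 0 with rfl | hn
  · simp
  have hn1 : (1 : ℝ) ≤ |(n : ℝ)| := by exact_mod_cast Int.one_le_abs hn
  have htri : |2 * K * (n : ℝ)| ≤ |x + 2 * K * n| + |x| := by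
    simpa using abs_sub (x + 2 * K * n) x
  rw [abs_mul, abs_of_nonneg (by linarith [abs_nonneg x])] at htri
  nlinarith [abs_nonneg x]

lemma abs_add_two_mul_neg_round_le {K : ℝ} (hK : 0 < K) (x : ℝ) :
    |x + 2 * K * ((-round (x / (2 * K)) : ℤ) : ℝ)| ≤ K := by
  have h := abs_sub_round (x / (2 * K))
  have heq : x + 2 * K * ((-round (x / (2 * K)) : ℤ) : ℝ) =
      2 * K * (x / (2 * K) - round (x / (2 * K))) := by
    push_cast; field_simp; ring
  rw [heq, abs_mul, abs_of_pos (by positivity)]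
  nlinarith

lemma eq_and_eq_of_add_two_mul_eq {N a b s t : ℤ} (hab : |a - b| < 2 * N)
    (h : a + 2 * N * s = b + 2 * N * t) : a = b ∧ s = t := by
  have h0 : a - b = 0 := Int.eq_zero_of_abs_lt_dvd ⟨t - s, by linear_combination h⟩ hab
  have hN : 0 < N := by linarith [abs_nonneg (a - b)]
  exact ⟨by linarith, mul_left_cancel₀ (by positivity : 2 * N ≠ 0) (by linarith)⟩

open MeasureTheory in
lemma ENNReal.inner_le_L2_mul_L2_tsum {ι : Type*} [Countable ι] (f g : ι → ℝ≥0∞) :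
    ∑' i, f i * g i ≤ (∑' i, f i ^ (2 : ℝ)) ^ (2⁻¹ : ℝ) * (∑' i, g i ^ (2 : ℝ)) ^ (2⁻¹ : ℝ) := by
  let _ : MeasurableSpace ι := ⊤
  have := ENNReal.lintegral_mul_le_Lp_mul_Lq Measure.count Real.HolderConjugate.two_two
    (measurable_of_countable f).aemeasurable (measurable_of_countable g).aemeasurable
  simpa [lintegral_count] using this

lemma ENNReal.tsum_sq_le_tsum_inv_mul_tsum_mul_sq {ι : Type*} [Countable ι] (a : ι → ℝ≥0∞)
    {w : ι → ℝ} (hw : ∀ i, 0 < w i) :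
    (∑' i, a i) ^ 2 ≤ (∑' i, ENNReal.ofReal (w i)⁻¹) * ∑' i, ENNReal.ofReal (w i) * a i ^ 2 := by
  set f : ι → ℝ≥0∞ := fun i => ENNReal.ofReal (w i)⁻¹ ^ (2⁻¹ : ℝ)
  set g : ι → ℝ≥0∞ := fun i => (ENNReal.ofReal (w i) * a i ^ 2) ^ (2⁻¹ : ℝ)
  have hsq : ∀ x : ℝ≥0∞, (x ^ (2⁻¹ : ℝ)) ^ (2 : ℝ) = x := fun x => by
    rw [← ENNReal.rpow_mul]; norm_num
  have hfg : ∀ i, a i = f i * g i := fun i => by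
    rw [← ENNReal.mul_rpow_of_nonneg _ _ (by norm_num), ← mul_assoc,
      ← ENNReal.ofReal_mul (inv_nonneg.mpr (hw i).le), inv_mul_cancel₀ (hw i).ne',
      ENNReal.ofReal_one, one_mul, ← ENNReal.rpow_natCast, ← ENNReal.rpow_mul]
    norm_num
  calc (∑' i, a i) ^ 2 = (∑' i, f i * g i) ^ 2 := by simp_rw [← hfg]
    _ ≤ ((∑' i, f i ^ (2 : ℝ)) ^ (2⁻¹ : ℝ) * (∑' i, g i ^ (2 : ℝ)) ^ (2⁻¹ : ℝ)) ^ 2 :=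
        pow_le_pow_left₀ bot_le (ENNReal.inner_le_L2_mul_L2_tsum f g) 2
    _ = _ := by
        rw [mul_pow, ← ENNReal.rpow_natCast, ← ENNReal.rpow_natCast (_ ^ _), Nat.cast_ofNat,
          hsq, hsq]
        simp only [f, g, hsq]

lemma ENNReal.rpow_half_le_of_le_sq_mul {S M : ℝ≥0∞} {x : ℝ} (hx : 0 ≤ x)
    (h : S ≤ ENNReal.ofReal (x ^ 2) * M) :
    S ^ ((1 : ℝ) / 2) ≤ ENNReal.ofReal x * M ^ ((1 : ℝ) / 2) := by
  calc S ^ ((1 : ℝ) / 2) ≤ (ENNReal.ofReal (x ^ 2) * M) ^ ((1 : ℝ) / 2) := by gcongr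
    _ = _ := by
        rw [ENNReal.mul_rpow_of_nonneg _ _ (by norm_num), ENNReal.ofReal_rpow_of_nonneg
          (sq_nonneg x) (by norm_num), ← Real.sqrt_eq_rpow, Real.sqrt_sq hx]

lemma ofReal_mul_norm_sq {E : Type*} [NormedAddCommGroup E] {w : ℝ} (hw : 0 ≤ w) (z : E) :
    ENNReal.ofReal (w * ‖z‖ ^ 2) = ENNReal.ofReal w * ‖z‖ₑ ^ 2 := by
  rw [ENNReal.ofReal_mul hw, ENNReal.ofReal_pow (norm_nonneg _), ofReal_norm]

section EuclNorm

variable {p : ℕ}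

lemma euclNorm_nonneg (x : Fin p → ℝ) : 0 ≤ euclNorm x := norm_nonneg _

lemma euclNorm_sq (x : Fin p → ℝ) : euclNorm x ^ 2 = ∑ i, x i ^ 2 := by
  simp [euclNorm, EuclideanSpace.norm_sq_eq]

lemma abs_le_euclNorm (x : Fin p → ℝ) (i : Fin p) : |x i| ≤ euclNorm x :=
  PiLp.norm_apply_le ((EuclideanSpace.equiv (Fin p) ℝ).symm x) i

lemma mul_euclNorm_le_of_forall {x y : Fin p → ℝ} {K : ℝ} (hK : 0 ≤ K)
    (h : ∀ i, K * |x i| ≤ |y i|) : K * euclNorm x ≤ euclNorm y := by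
  rw [← pow_le_pow_iff_left₀ (mul_nonneg hK (euclNorm_nonneg x)) (euclNorm_nonneg y) two_ne_zero,
    mul_pow, euclNorm_sq, euclNorm_sq, Finset.mul_sum]
  refine Finset.sum_le_sum fun i _ => ?_
  rw [← sq_abs (x i), ← sq_abs (y i), ← mul_pow]
  exact pow_le_pow_left₀ (by positivity) (h i) 2

lemma euclNorm_rpow_le {x : Fin p → ℝ} {X γ : ℝ} (hX : 0 ≤ X) (hγ : 0 ≤ γ)
    (h : ∀ i, |x i| ≤ X) : euclNorm x ^ (2 * γ) ≤ (p : ℝ) ^ γ * (X ^ γ) ^ 2 := by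
  have hsq : euclNorm x ^ 2 ≤ p * X ^ 2 := by
    rw [euclNorm_sq]
    calc ∑ i, x i ^ 2 ≤ ∑ _i : Fin p, X ^ 2 :=
          Finset.sum_le_sum fun i _ => sq_le_sq' (abs_le.mp (h i)).1 (abs_le.mp (h i)).2
      _ = p * X ^ 2 := by simp
  calc euclNorm x ^ (2 * γ) = (euclNorm x ^ 2) ^ γ := by
        rw [← Real.rpow_natCast, ← Real.rpow_mul (euclNorm_nonneg x)]; norm_num
    _ ≤ (p * X ^ 2) ^ γ := Real.rpow_le_rpow (sq_nonneg _) hsq hγ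
    _ = (p : ℝ) ^ γ * (X ^ γ) ^ 2 := by
        rw [Real.mul_rpow (Nat.cast_nonneg p) (sq_nonneg X), ← Real.rpow_natCast,
          ← Real.rpow_mul hX, ← Real.rpow_natCast, ← Real.rpow_mul hX, mul_comm γ]

end EuclNorm

section LatticeZeta

variable {p : ℕ}

noncomputable def intNorm (x : Fin p → ℤ) : ℝ := euclNorm fun i => (x i : ℝ)

lemma intNorm_nonneg (x : Fin p → ℤ) : 0 ≤ intNorm x := euclNorm_nonneg _

@[simp] lemma intNorm_zero : intNorm (0 : Fin p → ℤ) = 0 := by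
  simp [intNorm, euclNorm, Pi.zero_def]

lemma one_le_intNorm {x : Fin p → ℤ} (hx : x ≠ 0) : 1 ≤ intNorm x := by
  obtain ⟨i, hi⟩ := Function.ne_iff.mp hx
  calc (1 : ℝ) ≤ |(x i : ℝ)| := by exact_mod_cast Int.one_le_abs hi
    _ ≤ intNorm x := abs_le_euclNorm (fun i => (x i : ℝ)) i

lemma intNorm_pos {x : Fin p → ℤ} (hx : x ≠ 0) : 0 < intNorm x :=
  one_pos.trans_le (one_le_intNorm hx)

/-- The term `x = 0` vanishes, as `0 ^ (-s) = 0` for `s ≠ 0`. -/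
noncomputable def latticeZeta (p : ℕ) (s : ℝ) : ℝ≥0∞ :=
  ∑' x : Fin p → ℤ, ENNReal.ofReal (intNorm x ^ (-s))

open Module in
lemma summable_intNorm_rpow_neg {s : ℝ} (hs : (p : ℝ) < s) :
    Summable fun x : Fin p → ℤ => intNorm x ^ (-s) := by
  let b := (EuclideanSpace.basisFun (Fin p) ℝ).toBasis
  have hrank : finrank ℤ (Submodule.span ℤ (Set.range b)) = p := by
    rw [ZLattice.rank ℝ]; simp
  have h := ZLattice.summable_norm_rpow (L := Submodule.span ℤ (Set.range b)) (-s)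
    (by rw [hrank]; linarith)
  refine (h.comp_injective (b.restrictScalars ℤ).equivFun.symm.injective).congr fun x => ?_
  simp only [Function.comp_apply, Submodule.coe_norm, intNorm, euclNorm]
  congr 2
  ext i
  rw [Basis.equivFun_symm_apply, Submodule.coe_sum]
  simp_rw [Submodule.coe_smul, Basis.restrictScalars_apply]
  simp [b, Pi.single_apply]

lemma latticeZeta_ne_top {s : ℝ} (hs : (p : ℝ) < s) : latticeZeta p s ≠ ⊤ := by
  rw [latticeZeta, ← ENNReal.ofReal_tsum_of_nonneg
    (fun x => Real.rpow_nonneg (intNorm_nonneg x) _) (summable_intNorm_rpow_neg hs)]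
  exact ENNReal.ofReal_ne_top

end LatticeZeta

lemma mul_intNorm_le_euclNorm_add {p : ℕ} {K : ℝ} (hK : 0 ≤ K) {t : Fin p → ℝ}
    (ht : ∀ i, |t i| ≤ K) (u : Fin p → ℤ) :
    K * intNorm u ≤ euclNorm fun i => t i + 2 * K * u i :=
  mul_euclNorm_le_of_forall hK fun i => mul_abs_le_abs_add_two_mul (ht i) (u i)

section Anisotropic

variable {d m : ℕ} {K L α β θ : ℝ}

noncomputable def anisoWeight (K L α β : ℝ) (q : (Fin d → ℤ) × (Fin m → ℤ)) : ℝ :=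
  (K * intNorm q.1) ^ (2 * α) + (L * intNorm q.2) ^ (2 * β)

/-- The axis terms are needed because the product term vanishes on the axes (`0 ^ (-s) = 0`). -/
noncomputable def anisoMajorant (α β θ : ℝ) (q : (Fin d → ℤ) × (Fin m → ℤ)) : ℝ :=
  ((if q.2 = 0 then intNorm q.1 ^ (-(2 * α)) else 0) +
    if q.1 = 0 then intNorm q.2 ^ (-(2 * β)) else 0) +
    intNorm q.1 ^ (-(2 * α * θ)) * intNorm q.2 ^ (-(2 * β * (1 - θ)))

lemma anisoWeight_pos (hK : 0 < K) (hL : 0 < L) {q : (Fin d → ℤ) × (Fin m → ℤ)} (hq : q ≠ 0) :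
    0 < anisoWeight K L α β q := by
  have h1 := Real.rpow_nonneg (mul_nonneg hK.le (intNorm_nonneg q.1)) (2 * α)
  have h2 := Real.rpow_nonneg (mul_nonneg hL.le (intNorm_nonneg q.2)) (2 * β)
  by_cases hu : q.1 = 0
  · have hw : q.2 ≠ 0 := fun hw => hq (Prod.ext hu hw)
    have := Real.rpow_pos_of_pos (mul_pos hL (intNorm_pos hw)) (2 * β)
    unfold anisoWeight; linarith
  · have := Real.rpow_pos_of_pos (mul_pos hK (intNorm_pos hu)) (2 * α)
    unfold anisoWeight; linarith

lemma inv_anisoWeight_le (hK : 0 < K) (hL : 0 < L) (hα : 0 < α) (hβ : 0 < β) (hθ0 : 0 ≤ θ)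
    (hθ1 : θ ≤ 1) {q : (Fin d → ℤ) × (Fin m → ℤ)} (hq : q ≠ 0) :
    (anisoWeight K L α β q)⁻¹ ≤ (K ^ (-α) + L ^ (-β)) ^ 2 * anisoMajorant α β θ q := by
  obtain ⟨u, w⟩ := q
  set R := K ^ (-α) + L ^ (-β)
  have hx : K ^ (-α) ≤ R := le_add_of_nonneg_right (by positivity)
  have hy : L ^ (-β) ≤ R := le_add_of_nonneg_left (by positivity)
  have hu0 := intNorm_nonneg u
  have hw0 := intNorm_nonneg w
  have hprod : 0 ≤ intNorm u ^ (-(2 * α * θ)) * intNorm w ^ (-(2 * β * (1 - θ))) :=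
    mul_nonneg (Real.rpow_nonneg hu0 _) (Real.rpow_nonneg hw0 _)
  by_cases hw : w = 0
  · have hu : u ≠ 0 := fun hu => hq (by rw [hu, hw]; rfl)
    have hA : anisoWeight K L α β (u, w) = (K * intNorm u) ^ (2 * α) := by
      simp [anisoWeight, hw, Real.zero_rpow (mul_ne_zero two_ne_zero hβ.ne')]
    calc (anisoWeight K L α β (u, w))⁻¹ = (K ^ (-α)) ^ 2 * intNorm u ^ (-(2 * α)) := by
          rw [hA, inv_mul_rpow hK.le hu0]
      _ ≤ R ^ 2 * intNorm u ^ (-(2 * α)) := by gcongr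
      _ ≤ R ^ 2 * anisoMajorant α β θ (u, w) := by
          gcongr
          rw [anisoMajorant, if_pos hw, if_neg hu, add_zero]
          exact le_add_of_nonneg_right hprod
  by_cases hu : u = 0
  · have hA : anisoWeight K L α β (u, w) = (L * intNorm w) ^ (2 * β) := by
      simp [anisoWeight, hu, Real.zero_rpow (mul_ne_zero two_ne_zero hα.ne')]
    calc (anisoWeight K L α β (u, w))⁻¹ = (L ^ (-β)) ^ 2 * intNorm w ^ (-(2 * β)) := by
          rw [hA, inv_mul_rpow hL.le hw0]
      _ ≤ R ^ 2 * intNorm w ^ (-(2 * β)) := by gcongr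
      _ ≤ R ^ 2 * anisoMajorant α β θ (u, w) := by
          gcongr
          rw [anisoMajorant, if_neg hw, if_pos hu, zero_add]
          exact le_add_of_nonneg_right hprod
  have hA := Real.rpow_pos_of_pos (mul_pos hK (intNorm_pos hu)) (2 * α)
  have hB := Real.rpow_pos_of_pos (mul_pos hL (intNorm_pos hw)) (2 * β)
  calc (anisoWeight K L α β (u, w))⁻¹
      ≤ ((K * intNorm u) ^ (2 * α)) ^ (-θ) * ((L * intNorm w) ^ (2 * β)) ^ (-(1 - θ)) :=
        inv_add_le_rpow_neg_mul_rpow_neg hA hB hθ0 hθ1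
    _ = (K ^ (-α)) ^ (2 * θ) * (L ^ (-β)) ^ (2 * (1 - θ)) *
          (intNorm u ^ (-(2 * α * θ)) * intNorm w ^ (-(2 * β * (1 - θ)))) := by
        rw [mul_rpow_rpow_neg hK.le hu0, mul_rpow_rpow_neg hL.le hw0]
        ring
    _ ≤ R ^ 2 * anisoMajorant α β θ (u, w) := by
        gcongr
        · exact rpow_mul_rpow_one_sub_le_sq (by positivity) (by positivity) hx hy hθ0 hθ1
        · rw [anisoMajorant, if_neg hw, if_neg hu, add_zero, zero_add]

end Anisotropic

lemma tsum_ofReal_anisoMajorant_eq {d m : ℕ} (α β θ : ℝ) :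
    ∑' q : (Fin d → ℤ) × (Fin m → ℤ), ENNReal.ofReal (anisoMajorant α β θ q) =
      latticeZeta d (2 * α) + latticeZeta m (2 * β) +
        latticeZeta d (2 * α * θ) * latticeZeta m (2 * β * (1 - θ)) := by
  have hz : ∀ {p : ℕ} (x : Fin p → ℤ) (s : ℝ), 0 ≤ intNorm x ^ s :=
    fun x s => Real.rpow_nonneg (intNorm_nonneg x) s
  have hsplit : ∀ q : (Fin d → ℤ) × (Fin m → ℤ), ENNReal.ofReal (anisoMajorant α β θ q) =
      ((if q.2 = 0 then ENNReal.ofReal (intNorm q.1 ^ (-(2 * α))) else 0) +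
        if q.1 = 0 then ENNReal.ofReal (intNorm q.2 ^ (-(2 * β))) else 0) +
        ENNReal.ofReal (intNorm q.1 ^ (-(2 * α * θ))) *
          ENNReal.ofReal (intNorm q.2 ^ (-(2 * β * (1 - θ)))) := fun q => by
    rw [anisoMajorant, ENNReal.ofReal_add (by split_ifs <;> simp [hz, add_nonneg])
      (mul_nonneg (hz _ _) (hz _ _)), ENNReal.ofReal_add (by split_ifs <;> simp [hz])
      (by split_ifs <;> simp [hz]), ENNReal.ofReal_mul (hz _ _)]
    split_ifs <;> simp
  simp_rw [hsplit]
  rw [ENNReal.tsum_add, ENNReal.tsum_add, ENNReal.tsum_prod', ENNReal.tsum_prod',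
    ENNReal.tsum_prod', ENNReal.tsum_comm (f := fun a b => if a = 0 then _ else 0)]
  simp only [tsum_ite_eq, ENNReal.tsum_mul_left, ENNReal.tsum_mul_right, latticeZeta]

lemma tsum_ofReal_anisoMajorant_ne_top {d m : ℕ} {α β θ : ℝ} (hα : (d : ℝ) < 2 * α)
    (hβ : (m : ℝ) < 2 * β) (hαθ : (d : ℝ) < 2 * α * θ) (hβθ : (m : ℝ) < 2 * β * (1 - θ)) :
    ∑' q : (Fin d → ℤ) × (Fin m → ℤ), ENNReal.ofReal (anisoMajorant α β θ q) ≠ ⊤ := by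
  rw [tsum_ofReal_anisoMajorant_eq]
  exact ENNReal.add_ne_top.mpr ⟨ENNReal.add_ne_top.mpr ⟨latticeZeta_ne_top hα,
    latticeZeta_ne_top hβ⟩, ENNReal.mul_ne_top (latticeZeta_ne_top hαθ) (latticeZeta_ne_top hβθ)⟩

section IndexSet

variable {d m : ℕ} (Q : Matrix (Fin d) (Fin m) ℝ) {K L : ℕ}

noncomputable def coordI (k : Fin (d + m) → ℤ) : Fin d → ℝ :=
  fun i => (k (Fin.castAdd m i) : ℝ) + Q.mulVec (fun j => (k (Fin.natAdd d j) : ℝ)) i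

def coordII (k : Fin (d + m) → ℤ) : Fin m → ℝ := fun j => (k (Fin.natAdd d j) : ℝ)

lemma wMix_eq (γ δ : ℝ) (k : Fin (d + m) → ℤ) :
    wMix d m Q γ δ k = euclNorm (coordI Q k) ^ (2 * γ) + euclNorm (coordII k) ^ (2 * δ) := rfl

lemma wMix_nonneg (γ δ : ℝ) (k : Fin (d + m) → ℤ) : 0 ≤ wMix d m Q γ δ k :=
  add_nonneg (Real.rpow_nonneg (euclNorm_nonneg _) _) (Real.rpow_nonneg (euclNorm_nonneg _) _)

variable {Q} {k : Fin (d + m) → ℤ}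

lemma abs_coordI_le (hk : memK d m Q K L k) (i : Fin d) : |coordI Q k i| ≤ K :=
  abs_le.mpr ⟨(hk.1 i).1, (hk.1 i).2.le⟩

lemma abs_coordII_le (hk : memK d m Q K L k) (j : Fin m) : |coordII k j| ≤ L := by
  unfold coordII
  exact abs_le.mpr ⟨by exact_mod_cast (hk.2 j).1, by exact_mod_cast (hk.2 j).2.le⟩

lemma le_euclNorm_coordI_or_le_euclNorm_coordII (hk : ¬ memK d m Q K L k) :
    (K : ℝ) ≤ euclNorm (coordI Q k) ∨ (L : ℝ) ≤ euclNorm (coordII k) := by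
  by_contra! h
  refine hk ⟨fun i => ?_, fun j => ?_⟩
  · have hi := abs_lt.mp ((abs_le_euclNorm _ i).trans_lt h.1)
    exact ⟨hi.1.le, hi.2⟩
  · have hj : |(k (Fin.natAdd d j) : ℝ)| < L := (abs_le_euclNorm (coordII k) j).trans_lt h.2
    rw [← Int.cast_abs, ← Int.cast_natCast, Int.cast_lt, abs_lt] at hj
    exact ⟨hj.1.le, hj.2⟩

variable (v : Fin (d + m) → ℤ)

lemma coordI_shiftIdx (i : Fin d) :
    coordI Q (shiftIdx d m K L k v) i = coordI Q k i +
      2 * L * Q.mulVec (fun j => (v (Fin.natAdd d j) : ℝ)) i + 2 * K * v (Fin.castAdd m i) := by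
  simp only [coordI, shiftIdx, Fin.append_left, Fin.append_right, Int.cast_add, Int.cast_mul,
    Int.cast_ofNat, Int.cast_natCast, Matrix.mulVec, dotProduct, Finset.mul_sum, mul_add,
    Finset.sum_add_distrib, mul_left_comm _ (2 * (L : ℝ))]
  ring

lemma coordII_shiftIdx (j : Fin m) :
    coordII (shiftIdx d m K L k v) j = coordII k j + 2 * L * v (Fin.natAdd d j) := by
  simp [coordII, shiftIdx]

end IndexSet

section Aliasing

variable {d m : ℕ} {Q : Matrix (Fin d) (Fin m) ℝ} {K L : ℕ} {k : Fin (d + m) → ℤ}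

variable (Q K L k) in
noncomputable def aliasShift (w : Fin m → ℤ) : Fin d → ℤ :=
  fun i => round ((coordI Q k i + 2 * L * Q.mulVec (fun j => (w j : ℝ)) i) / (2 * K))

variable (Q K L k) in
noncomputable def aliasIndex (v : Fin (d + m) → ℤ) : (Fin d → ℤ) × (Fin m → ℤ) :=
  (fun i => v (Fin.castAdd m i) + aliasShift Q K L k (fun j => v (Fin.natAdd d j)) i,
    fun j => v (Fin.natAdd d j))

lemma aliasIndex_injective : Function.Injective (aliasIndex Q K L k) := by
  intro v v' h
  simp only [aliasIndex, Prod.mk.injEq] at h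
  obtain ⟨hI, hII⟩ := h
  rw [hII] at hI
  refine (Fin.appendEquiv d m).symm.injective (Prod.ext (funext fun i => ?_) hII)
  simpa using congrFun hI i

/-- `round` sends `[-1/2, 1/2)` to `0`, matching the half-open intervals `[-K, K)` of `memK`. -/
lemma aliasIndex_zero (hK : 0 < K) (hk : memK d m Q K L k) : aliasIndex Q K L k 0 = 0 := by
  have hK' : (0 : ℝ) < 2 * K := by positivity
  refine Prod.ext (funext fun i => ?_) rfl
  show 0 + round ((coordI Q k i + 2 * L * Q.mulVec (fun _ => ((0 : ℤ) : ℝ)) i) / (2 * K)) = 0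
  simp only [Int.cast_zero, zero_add, round_eq_zero_iff, Set.mem_Ico]
  rw [show (fun _ : Fin m => (0 : ℝ)) = 0 from rfl, Matrix.mulVec_zero, Pi.zero_apply, mul_zero,
    add_zero]
  have h : -(K : ℝ) ≤ coordI Q k i ∧ coordI Q k i < K := hk.1 i
  constructor
  · rw [le_div_iff₀ hK']; linarith
  · rw [div_lt_iff₀ hK']; linarith

lemma anisoWeight_aliasIndex_le (hK : 0 < K) (hk : memK d m Q K L k) {α β : ℝ} (hα : 0 ≤ α)
    (hβ : 0 ≤ β) (v : Fin (d + m) → ℤ) :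
    anisoWeight K L α β (aliasIndex Q K L k v) ≤ wMix d m Q α β (shiftIdx d m K L k v) := by
  have hK' : (0 : ℝ) < K := by exact_mod_cast hK
  set t : Fin d → ℝ :=
    fun i => coordI Q k i + 2 * L * Q.mulVec (fun j => (v (Fin.natAdd d j) : ℝ)) i
  have hI : (K : ℝ) * intNorm (aliasIndex Q K L k v).1 ≤
      euclNorm (coordI Q (shiftIdx d m K L k v)) := by
    convert mul_intNorm_le_euclNorm_add hK'.le
      (fun i => abs_add_two_mul_neg_round_le hK' (t i)) (aliasIndex Q K L k v).1 using 2 with i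
    funext i
    simp only [coordI_shiftIdx, aliasIndex, aliasShift, t]
    push_cast
    ring
  have hII : (L : ℝ) * intNorm (aliasIndex Q K L k v).2 ≤
      euclNorm (coordII (shiftIdx d m K L k v)) := by
    convert mul_intNorm_le_euclNorm_add (Nat.cast_nonneg L) (abs_coordII_le hk)
      (aliasIndex Q K L k v).2 using 2
    funext j
    exact coordII_shiftIdx v j
  rw [wMix_eq, anisoWeight]
  gcongr
  · exact mul_nonneg hK'.le (intNorm_nonneg _)
  · exact mul_nonneg (Nat.cast_nonneg L) (intNorm_nonneg _)

lemma aliasIndex_ne_zero (hK : 0 < K) (hk : memK d m Q K L k) {v : Fin (d + m) → ℤ}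
    (hv : v ≠ 0) : aliasIndex Q K L k v ≠ 0 := fun h =>
  hv (aliasIndex_injective (h.trans (aliasIndex_zero hK hk).symm))

lemma wMix_shiftIdx_pos (hK : 0 < K) (hL : 0 < L) (hk : memK d m Q K L k) {α β : ℝ}
    (hα : 0 ≤ α) (hβ : 0 ≤ β) {v : Fin (d + m) → ℤ} (hv : v ≠ 0) :
    0 < wMix d m Q α β (shiftIdx d m K L k v) :=
  (anisoWeight_pos (by exact_mod_cast hK) (by exact_mod_cast hL)
    (aliasIndex_ne_zero hK hk hv)).trans_le (anisoWeight_aliasIndex_le hK hk hα hβ v)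

lemma tsum_inv_wMix_shiftIdx_le (hK : 0 < K) (hL : 0 < L) (hk : memK d m Q K L k) {α β θ : ℝ}
    (hα : 0 < α) (hβ : 0 < β) (hθ0 : 0 ≤ θ) (hθ1 : θ ≤ 1) :
    ∑' v : {v : Fin (d + m) → ℤ // v ≠ 0},
        ENNReal.ofReal (wMix d m Q α β (shiftIdx d m K L k v))⁻¹ ≤
      ENNReal.ofReal (((K : ℝ) ^ (-α) + (L : ℝ) ^ (-β)) ^ 2) *
        ∑' q : (Fin d → ℤ) × (Fin m → ℤ), ENNReal.ofReal (anisoMajorant α β θ q) := by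
  have hK' : (0 : ℝ) < K := by exact_mod_cast hK
  have hL' : (0 : ℝ) < L := by exact_mod_cast hL
  calc ∑' v : {v : Fin (d + m) → ℤ // v ≠ 0},
        ENNReal.ofReal (wMix d m Q α β (shiftIdx d m K L k v))⁻¹
      ≤ ∑' v : {v : Fin (d + m) → ℤ // v ≠ 0},
          ENNReal.ofReal (((K : ℝ) ^ (-α) + (L : ℝ) ^ (-β)) ^ 2) *
            ENNReal.ofReal (anisoMajorant α β θ (aliasIndex Q K L k v)) := by
        refine ENNReal.tsum_le_tsum fun v => ?_
        rw [← ENNReal.ofReal_mul (sq_nonneg _)]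
        refine ENNReal.ofReal_le_ofReal ((inv_anti₀ ?_ ?_).trans
          (inv_anisoWeight_le hK' hL' hα hβ hθ0 hθ1 (aliasIndex_ne_zero hK hk v.2)))
        · exact anisoWeight_pos hK' hL' (aliasIndex_ne_zero hK hk v.2)
        · exact anisoWeight_aliasIndex_le hK hk hα.le hβ.le v
    _ = ENNReal.ofReal (((K : ℝ) ^ (-α) + (L : ℝ) ^ (-β)) ^ 2) *
          ∑' v : {v : Fin (d + m) → ℤ // v ≠ 0},
            ENNReal.ofReal (anisoMajorant α β θ (aliasIndex Q K L k v)) := ENNReal.tsum_mul_left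
    _ ≤ _ := by
        gcongr
        exact ENNReal.tsum_comp_le_tsum_of_injective
          (aliasIndex_injective.comp Subtype.val_injective) _

end Aliasing

section Estimates

variable {d m : ℕ} {Q : Matrix (Fin d) (Fin m) ℝ} {K L : ℕ} {k : Fin (d + m) → ℤ}

lemma wMix_le_of_memK (hk : memK d m Q K L k) {μ ν : ℝ} (hμ : 0 ≤ μ) (hν : 0 ≤ ν) :
    wMix d m Q μ ν k ≤ ((d : ℝ) ^ μ + (m : ℝ) ^ ν) * ((K : ℝ) ^ μ + (L : ℝ) ^ ν) ^ 2 := by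
  have h1 := euclNorm_rpow_le (Nat.cast_nonneg K) hμ (abs_coordI_le hk)
  have h2 := euclNorm_rpow_le (Nat.cast_nonneg L) hν (abs_coordII_le hk)
  have hK : ((K : ℝ) ^ μ) ^ 2 ≤ ((K : ℝ) ^ μ + (L : ℝ) ^ ν) ^ 2 := by
    gcongr; exact le_add_of_nonneg_right (by positivity)
  have hL : ((L : ℝ) ^ ν) ^ 2 ≤ ((K : ℝ) ^ μ + (L : ℝ) ^ ν) ^ 2 := by
    gcongr; exact le_add_of_nonneg_left (by positivity)
  rw [wMix_eq, add_mul]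
  gcongr <;> [exact h1.trans (by gcongr); exact h2.trans (by gcongr)]

lemma wMix_le_of_not_memK (hK : 0 < K) (hL : 0 < L) (hk : ¬ memK d m Q K L k) {α β μ ν : ℝ}
    (hμ0 : 0 ≤ μ) (hμ : μ ≤ α) (hν0 : 0 ≤ ν) (hν : ν ≤ β) :
    wMix d m Q μ ν k ≤
      2 * (((K : ℝ) ^ (-α) + (L : ℝ) ^ (-β)) * ((K : ℝ) ^ μ + (L : ℝ) ^ ν)) ^ 2 *
        wMix d m Q α β k := by
  have hK' : (0 : ℝ) < K := by exact_mod_cast hK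
  have hL' : (0 : ℝ) < L := by exact_mod_cast hL
  have h := le_euclNorm_coordI_or_le_euclNorm_coordII hk
  have hI := rpow_le_sq_mul_add_of_le_or_le (ν := ν) (euclNorm_nonneg _) (euclNorm_nonneg _)
    hK' hL' hμ0 hμ (hν0.trans hν) h
  have hII := rpow_le_sq_mul_add_of_le_or_le (ν := μ) (euclNorm_nonneg _) (euclNorm_nonneg _)
    hL' hK' hν0 hν (hμ0.trans hμ) h.symm
  rw [add_comm ((L : ℝ) ^ (-β)), add_comm ((L : ℝ) ^ ν), add_comm (euclNorm (coordII k) ^ _)]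
    at hII
  rw [wMix_eq, wMix_eq]
  linarith

lemma shiftIdx_inj_of_memK {k' v v' : Fin (d + m) → ℤ}
    (hk : memK d m Q K L k) (hk' : memK d m Q K L k')
    (h : shiftIdx d m K L k v = shiftIdx d m K L k' v') : k = k' ∧ v = v' := by
  have hII : ∀ j, k (Fin.natAdd d j) = k' (Fin.natAdd d j) ∧
      v (Fin.natAdd d j) = v' (Fin.natAdd d j) := fun j => by
    have hj := congrFun h (Fin.natAdd d j)
    simp only [shiftIdx, Fin.append_right] at hj
    refine eq_and_eq_of_add_two_mul_eq (abs_sub_lt_iff.mpr ⟨?_, ?_⟩) hj <;>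
      linarith [(hk.2 j).1, (hk.2 j).2, (hk'.2 j).1, (hk'.2 j).2]
  have hQ : Q.mulVec (fun j => (k (Fin.natAdd d j) : ℝ)) =
      Q.mulVec (fun j => (k' (Fin.natAdd d j) : ℝ)) := by
    simp only [fun j => (hII j).1]
  have hI : ∀ i, k (Fin.castAdd m i) = k' (Fin.castAdd m i) ∧
      v (Fin.castAdd m i) = v' (Fin.castAdd m i) := fun i => by
    have hi := congrFun h (Fin.castAdd m i)
    simp only [shiftIdx, Fin.append_left] at hi
    refine eq_and_eq_of_add_two_mul_eq ?_ hi
    have h1 := hk.1 i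
    have h2 := hk'.1 i
    rw [← hQ] at h2
    have : |((k (Fin.castAdd m i) - k' (Fin.castAdd m i) : ℤ) : ℝ)| < 2 * K := by
      push_cast
      exact abs_sub_lt_iff.mpr ⟨by linarith, by linarith⟩
    exact_mod_cast this
  exact ⟨(Fin.appendEquiv d m).symm.injective (Prod.ext (funext fun i => (hI i).1)
      (funext fun j => (hII j).1)),
    (Fin.appendEquiv d m).symm.injective (Prod.ext (funext fun i => (hI i).2)
      (funext fun j => (hII j).2))⟩

end Estimates

section Error

variable {d m : ℕ} {Q : Matrix (Fin d) (Fin m) ℝ} {K L : ℕ} {α β θ μ ν : ℝ}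
  {c e : (Fin (d + m) → ℤ) → ℂ}

lemma ofReal_wMix_mul_sq_le_of_memK (hK : 0 < K) (hL : 0 < L) (hα : 0 < α) (hβ : 0 < β)
    (hθ0 : 0 ≤ θ) (hθ1 : θ ≤ 1) (hμ : 0 ≤ μ) (hν : 0 ≤ ν) {k : Fin (d + m) → ℤ}
    (hk : memK d m Q K L k)
    (he : e k = -∑' v : {v : Fin (d + m) → ℤ // v ≠ 0}, c (shiftIdx d m K L k v)) :
    ENNReal.ofReal (wMix d m Q μ ν k * ‖e k‖ ^ 2) ≤
      ENNReal.ofReal (((d : ℝ) ^ μ + (m : ℝ) ^ ν) * ((K : ℝ) ^ μ + (L : ℝ) ^ ν) ^ 2) *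
        (ENNReal.ofReal (((K : ℝ) ^ (-α) + (L : ℝ) ^ (-β)) ^ 2) *
          ∑' q : (Fin d → ℤ) × (Fin m → ℤ), ENNReal.ofReal (anisoMajorant α β θ q)) *
        ∑' v : {v : Fin (d + m) → ℤ // v ≠ 0},
          ENNReal.ofReal (wMix d m Q α β (shiftIdx d m K L k v) *
            ‖c (shiftIdx d m K L k v)‖ ^ 2) := by
  have hCS : ‖e k‖ₑ ^ 2 ≤
      (∑' v : {v : Fin (d + m) → ℤ // v ≠ 0},
        ENNReal.ofReal (wMix d m Q α β (shiftIdx d m K L k v))⁻¹) *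
      ∑' v : {v : Fin (d + m) → ℤ // v ≠ 0},
        ENNReal.ofReal (wMix d m Q α β (shiftIdx d m K L k v)) * ‖c (shiftIdx d m K L k v)‖ₑ ^ 2 :=
    calc ‖e k‖ₑ ^ 2 ≤ (∑' v : {v : Fin (d + m) → ℤ // v ≠ 0}, ‖c (shiftIdx d m K L k v)‖ₑ) ^ 2 := by
          rw [he, enorm_neg]
          gcongr
          exact enorm_tsum_le_tsum_enorm
      _ ≤ _ := ENNReal.tsum_sq_le_tsum_inv_mul_tsum_mul_sq _ fun v =>
          wMix_shiftIdx_pos hK hL hk hα.le hβ.le v.2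
  simp_rw [ofReal_mul_norm_sq (wMix_nonneg _ _ _ _)]
  calc ENNReal.ofReal (wMix d m Q μ ν k) * ‖e k‖ₑ ^ 2
      ≤ ENNReal.ofReal (((d : ℝ) ^ μ + (m : ℝ) ^ ν) * ((K : ℝ) ^ μ + (L : ℝ) ^ ν) ^ 2) *
          ((∑' v : {v : Fin (d + m) → ℤ // v ≠ 0},
            ENNReal.ofReal (wMix d m Q α β (shiftIdx d m K L k v))⁻¹) *
          ∑' v : {v : Fin (d + m) → ℤ // v ≠ 0}, ENNReal.ofReal (wMix d m Q α β
            (shiftIdx d m K L k v)) * ‖c (shiftIdx d m K L k v)‖ₑ ^ 2) :=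
        mul_le_mul' (ENNReal.ofReal_le_ofReal (wMix_le_of_memK hk hμ hν)) hCS
    _ ≤ _ := by
        rw [← mul_assoc]
        gcongr
        exact tsum_inv_wMix_shiftIdx_le hK hL hk hα hβ hθ0 hθ1

lemma tsum_ofReal_wMix_mul_sq_le (hK : 0 < K) (hL : 0 < L) (hα : 0 < α) (hβ : 0 < β)
    (hθ0 : 0 ≤ θ) (hθ1 : θ ≤ 1) (hμ0 : 0 ≤ μ) (hμ : μ ≤ α) (hν0 : 0 ≤ ν) (hν : ν ≤ β)
    (he₁ : ∀ k, memK d m Q K L k →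
      e k = -∑' v : {v : Fin (d + m) → ℤ // v ≠ 0}, c (shiftIdx d m K L k v))
    (he₂ : ∀ k, ¬ memK d m Q K L k → e k = c k) :
    ∑' k, ENNReal.ofReal (wMix d m Q μ ν k * ‖e k‖ ^ 2) ≤
      (ENNReal.ofReal ((d : ℝ) ^ μ + (m : ℝ) ^ ν) *
          ∑' q : (Fin d → ℤ) × (Fin m → ℤ), ENNReal.ofReal (anisoMajorant α β θ q) + 2) *
        ENNReal.ofReal ((((K : ℝ) ^ (-α) + (L : ℝ) ^ (-β)) * ((K : ℝ) ^ μ + (L : ℝ) ^ ν)) ^ 2) *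
        ∑' k, ENNReal.ofReal (wMix d m Q α β k * ‖c k‖ ^ 2) := by
  set F : (Fin (d + m) → ℤ) → ℝ≥0∞ := fun k => ENNReal.ofReal (wMix d m Q α β k * ‖c k‖ ^ 2)
  set R := (K : ℝ) ^ (-α) + (L : ℝ) ^ (-β)
  set S := (K : ℝ) ^ μ + (L : ℝ) ^ ν
  set Z := ∑' q : (Fin d → ℤ) × (Fin m → ℤ), ENNReal.ofReal (anisoMajorant α β θ q)
  set I := {k | memK d m Q K L k}
  have hI : ∑' k : I, ENNReal.ofReal (wMix d m Q μ ν k * ‖e k‖ ^ 2) ≤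
      ENNReal.ofReal ((d : ℝ) ^ μ + (m : ℝ) ^ ν) * Z * ENNReal.ofReal ((R * S) ^ 2) *
        ∑' k, F k := by
    have hinj : Function.Injective fun q : I × {v : Fin (d + m) → ℤ // v ≠ 0} =>
        shiftIdx d m K L q.1 q.2 := fun q q' h => by
      obtain ⟨hk, hv⟩ := shiftIdx_inj_of_memK q.1.2 q'.1.2 h
      exact Prod.ext (Subtype.ext hk) (Subtype.ext hv)
    calc ∑' k : I, ENNReal.ofReal (wMix d m Q μ ν k * ‖e k‖ ^ 2)
        ≤ ∑' k : I, ENNReal.ofReal (((d : ℝ) ^ μ + (m : ℝ) ^ ν) * S ^ 2) *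
            (ENNReal.ofReal (R ^ 2) * Z) *
            ∑' v : {v : Fin (d + m) → ℤ // v ≠ 0}, F (shiftIdx d m K L k v) :=
          ENNReal.tsum_le_tsum fun k => ofReal_wMix_mul_sq_le_of_memK hK hL hα hβ hθ0 hθ1 hμ0 hν0
            k.2 (he₁ k k.2)
      _ = ENNReal.ofReal (((d : ℝ) ^ μ + (m : ℝ) ^ ν) * S ^ 2) * (ENNReal.ofReal (R ^ 2) * Z) *
            ∑' q : I × {v : Fin (d + m) → ℤ // v ≠ 0}, F (shiftIdx d m K L q.1 q.2) := by
          rw [ENNReal.tsum_mul_left, ENNReal.tsum_prod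
            (f := fun (k : I) (v : {v : Fin (d + m) → ℤ // v ≠ 0}) => F (shiftIdx d m K L k v))]
      _ ≤ ENNReal.ofReal (((d : ℝ) ^ μ + (m : ℝ) ^ ν) * S ^ 2) * (ENNReal.ofReal (R ^ 2) * Z) *
            ∑' k, F k := by
          gcongr
          exact ENNReal.tsum_comp_le_tsum_of_injective hinj F
      _ = _ := by
          rw [ENNReal.ofReal_mul (by positivity), mul_pow, ENNReal.ofReal_mul (by positivity)]
          ring
  have hO : ∑' k : ↥Iᶜ, ENNReal.ofReal (wMix d m Q μ ν k * ‖e k‖ ^ 2) ≤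
      2 * ENNReal.ofReal ((R * S) ^ 2) * ∑' k, F k :=
    calc ∑' k : ↥Iᶜ, ENNReal.ofReal (wMix d m Q μ ν k * ‖e k‖ ^ 2)
        ≤ ∑' k : ↥Iᶜ, ENNReal.ofReal (2 * (R * S) ^ 2) * F k := ENNReal.tsum_le_tsum fun k => by
          rw [he₂ k k.2, ← ENNReal.ofReal_mul (by positivity), ← mul_assoc]
          exact ENNReal.ofReal_le_ofReal (mul_le_mul_of_nonneg_right
            (wMix_le_of_not_memK hK hL k.2 hμ0 hμ hν0 hν) (sq_nonneg _))
      _ ≤ ENNReal.ofReal (2 * (R * S) ^ 2) * ∑' k, F k := by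
          rw [ENNReal.tsum_mul_left]
          gcongr
          exact ENNReal.tsum_comp_le_tsum_of_injective Subtype.val_injective F
      _ = _ := by rw [ENNReal.ofReal_mul zero_le_two, ENNReal.ofReal_ofNat]
  rw [← ENNReal.summable.tsum_add_tsum_compl ENNReal.summable (s := I), add_mul, add_mul]
  exact add_le_add hI hO

end Error

theorem stmt16_general (d m : ℕ)
    (Q : Matrix (Fin d) (Fin m) ℝ)
    (α β μ ν : ℝ)
    (hβ : (m : ℝ) / 2 < β) (hα : (d : ℝ) / 2 < α)
    (hcond : (d : ℝ) / (2 * α) + (m : ℝ) / (2 * β) < 1)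
    (hμ0 : 0 ≤ μ) (hμ : μ ≤ α) (hν0 : 0 ≤ ν) (hν : ν ≤ β) :
    ∃ C : ℝ, 0 < C ∧ ∀ K L : ℕ, 0 < K → 0 < L →
      ∀ c e : (Fin (d + m) → ℤ) → ℂ,
        (∑' k : Fin (d + m) → ℤ, ENNReal.ofReal (wMix d m Q α β k * ‖c k‖ ^ 2)) ≠ ⊤ →
        (∀ k : Fin (d + m) → ℤ, memK d m Q K L k →
          e k = -∑' v : {v : Fin (d + m) → ℤ // v ≠ 0}, c (shiftIdx d m K L k v.1)) →
        (∀ k : Fin (d + m) → ℤ, ¬ memK d m Q K L k → e k = c k) →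
        (∑' k : Fin (d + m) → ℤ,
            ENNReal.ofReal (wMix d m Q μ ν k * ‖e k‖ ^ 2)) ^ ((1 : ℝ) / 2) ≤
          ENNReal.ofReal (C * ((K : ℝ) ^ (-α) + (L : ℝ) ^ (-β)) * ((K : ℝ) ^ μ + (L : ℝ) ^ ν)) *
            (∑' k : Fin (d + m) → ℤ,
              ENNReal.ofReal (wMix d m Q α β k * ‖c k‖ ^ 2)) ^ ((1 : ℝ) / 2) := by
  have hα0 : 0 < α := by linarith [(by positivity : (0 : ℝ) ≤ d / 2)]
  have hβ0 : 0 < β := by linarith [(by positivity : (0 : ℝ) ≤ m / 2)]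
  obtain ⟨θ, hθ0, hθ1, hdθ, hmθ⟩ :=
    exists_exponent_split (Nat.cast_nonneg d) (Nat.cast_nonneg m) hα0 hβ0 hcond
  set C₀ := ENNReal.ofReal ((d : ℝ) ^ μ + (m : ℝ) ^ ν) *
    ∑' q : (Fin d → ℤ) × (Fin m → ℤ), ENNReal.ofReal (anisoMajorant α β θ q) + 2
  have hC₀ : C₀ ≠ ⊤ := ENNReal.add_ne_top.mpr ⟨ENNReal.mul_ne_top ENNReal.ofReal_ne_top
    (tsum_ofReal_anisoMajorant_ne_top (by linarith) (by linarith) hdθ hmθ), ENNReal.ofNat_ne_top⟩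
  refine ⟨√C₀.toReal, Real.sqrt_pos.mpr (ENNReal.toReal_pos ?_ hC₀),
    fun K L hK hL c e _ he₁ he₂ => ENNReal.rpow_half_le_of_le_sq_mul (by positivity) ?_⟩
  · exact (lt_of_lt_of_le two_pos le_add_self).ne'
  refine (tsum_ofReal_wMix_mul_sq_le hK hL hα0 hβ0 hθ0.le hθ1.le hμ0 hμ hν0 hν he₁ he₂).trans_eq ?_
  rw [mul_assoc √_, mul_pow √_, Real.sq_sqrt ENNReal.toReal_nonneg,
    ENNReal.ofReal_mul ENNReal.toReal_nonneg, ENNReal.ofReal_toReal hC₀]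

/-- interpolation error bound in the mixed seminorm. With
`M = Σ_k (‖k_I + Q k_II‖^(2α) + ‖k_II‖^(2β))|c_k|² < ∞` and error coefficients
`e_k = -Σ_{v ≠ 0} c_{(k_I+2K v_I, k_II+2L v_II)}` for `k ∈ 𝒦_{K,L}`, `e_k = c_k` otherwise,
`(Σ_k (‖k_I + Q k_II‖^(2μ) + ‖k_II‖^(2ν))|e_k|²)^{1/2} ≤ C (K^{-α}+L^{-β})(K^μ+L^ν) M^{1/2}`. -/
theorem stmt16 (d m : ℕ) (hd : 1 ≤ d) (hm : 1 ≤ m)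
    (P : Matrix (Fin d) (Fin (d + m)) ℝ)
    (PI : Matrix (Fin d) (Fin d) ℝ) (hPI : PI = P.submatrix id (Fin.castAdd m))
    (PII : Matrix (Fin d) (Fin m) ℝ) (hPII : PII = P.submatrix id (Fin.natAdd d))
    (hinv : IsUnit PI)
    (Q : Matrix (Fin d) (Fin m) ℝ) (hQ : Q = PI⁻¹ * PII)
    (α β μ ν : ℝ)
    (hβ : (m : ℝ) / 2 < β) (hαβ : β ≤ α) (hα : (d : ℝ) / 2 < α)
    (hcond : (d : ℝ) / (2 * α) + (m : ℝ) / (2 * β) < 1)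
    (hμ0 : 0 ≤ μ) (hμ : μ ≤ α) (hν0 : 0 ≤ ν) (hν : ν ≤ β) :
    ∃ C : ℝ, 0 < C ∧ ∀ K L : ℕ, 0 < K → 0 < L →
      ∀ c e : (Fin (d + m) → ℤ) → ℂ,
        (∑' k : Fin (d + m) → ℤ, ENNReal.ofReal (wMix d m Q α β k * ‖c k‖ ^ 2)) ≠ ⊤ →
        (∀ k : Fin (d + m) → ℤ, memK d m Q K L k →
          e k = -∑' v : {v : Fin (d + m) → ℤ // v ≠ 0}, c (shiftIdx d m K L k v.1)) →
        (∀ k : Fin (d + m) → ℤ, ¬ memK d m Q K L k → e k = c k) →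
        (∑' k : Fin (d + m) → ℤ,
            ENNReal.ofReal (wMix d m Q μ ν k * ‖e k‖ ^ 2)) ^ ((1 : ℝ) / 2) ≤
          ENNReal.ofReal (C * ((K : ℝ) ^ (-α) + (L : ℝ) ^ (-β)) * ((K : ℝ) ^ μ + (L : ℝ) ^ ν)) *
            (∑' k : Fin (d + m) → ℤ,
              ENNReal.ofReal (wMix d m Q α β k * ‖c k‖ ^ 2)) ^ ((1 : ℝ) / 2) :=
  stmt16_general d m Q α β μ ν hβ hα hcond hμ0 hμ hν0 hν
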